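/- arXiv:2410.08101 — 7 statements merged into one kernel-verified Lean document; each statement's English description precedes it below -/
import Mathlib

section
/- Let H and K be complex inner product spaces and let A : H → K be a real-linear mapping with dense image that preserves orthogonality (i.e., ⟨x|y⟩ = 0 implies ⟨A x | A y⟩ = 0). Then for every norm-one element x₀ ∈ H, we have A(ℂ x₀) ⊆ ℂ A(x₀). -/
/-!
Write `u = A x₀` and `v = A (i x₀)`, so that `A` maps `ℂ x₀` into the real span `M` of `u, v`.
Every `y` splits as a multiple of `x₀` plus a vector orthogonal to both `x₀` and `i x₀`, whose
image is then orthogonal to `V = span_ℂ {u, v}`; so the orthogonal projection onto `V` maps the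
range of `A` into `M`. As `M` is closed and the range is dense, it maps all of `K` into `M`, i.e.
`V ⊆ M`. A complex span contained in the real span of the same two vectors forces `v ∈ ℂ u`.
-/

open Complex Submodule

section LinearAlgebra

variable {E F : Type*} [AddCommGroup E] [Module ℂ E]

theorem LinearMap.map_complex_smul [AddCommGroup F] [Module ℝ F] (A : E →ₗ[ℝ] F) (c : ℂ)
    (x : E) : A (c • x) = c.re • A x + c.im • A (I • x) := by
  conv_lhs => rw [← re_add_im c]
  rw [add_smul, mul_smul, Complex.coe_smul, Complex.coe_smul, map_add, map_smul, map_smul]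

theorem LinearMap.map_complex_smul_mem_span_pair [AddCommGroup F] [Module ℝ F]
    (A : E →ₗ[ℝ] F) (c : ℂ) (x : E) : A (c • x) ∈ span ℝ {A x, A (I • x)} :=
  mem_span_pair.mpr ⟨c.re, c.im, (A.map_complex_smul c x).symm⟩

theorem eq_zero_of_I_smul_eq_real_smul {w : E} {r : ℝ} (h : I • w = r • w) : w = 0 := by
  have hIr : I - r ≠ 0 := fun h0 => by simpa using congrArg im h0
  refine (smul_eq_zero.mp ?_).resolve_left hIr
  rw [sub_smul, h, Complex.coe_smul, sub_self]

theorem mem_span_singleton_of_span_pair_le {u v : E}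
    (h : (span ℂ {u, v}).restrictScalars ℝ ≤ span ℝ {u, v}) : v ∈ ℂ ∙ u := by
  have I_smul_mem : ∀ w ∈ span ℂ {u, v}, ∃ s t : ℝ, s • u + t • v = I • w :=
    fun w hw => mem_span_pair.mp (h (smul_mem _ I hw))
  obtain ⟨s, t, hu⟩ := I_smul_mem u (subset_span (by simp))
  by_cases ht : t = 0
  · have hu0 : u = 0 := eq_zero_of_I_smul_eq_real_smul (r := s) (by simp [← hu, ht])
    obtain ⟨_, t', hv⟩ := I_smul_mem v (subset_span (by simp))
    have hv0 : v = 0 := eq_zero_of_I_smul_eq_real_smul (r := t') (by simp [← hv, hu0])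
    rw [hv0]
    exact zero_mem _
  · have htv : t • v ∈ ℂ ∙ u := by
      rw [show t • v = I • u - s • u by rw [← hu]; abel]
      exact sub_mem (smul_mem _ _ (mem_span_singleton_self u))
        (smul_of_tower_mem _ _ (mem_span_singleton_self u))
    simpa [ht] using smul_of_tower_mem _ t⁻¹ htv

end LinearAlgebra

section InnerProductSpace

variable {H K : Type*} [NormedAddCommGroup H] [InnerProductSpace ℂ H]
  [NormedAddCommGroup K] [InnerProductSpace ℂ K]

def PreservesOrthogonality (A : H → K) : Prop :=
  ∀ x y : H, (inner ℂ x y : ℂ) = 0 → (inner ℂ (A x) (A y) : ℂ) = 0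

theorem PreservesOrthogonality.map_mem_orthogonal_span_pair {A : H → K}
    (hA : PreservesOrthogonality A) {x y : H} (hy : y ∈ (ℂ ∙ x)ᗮ) :
    A y ∈ (span ℂ {A x, A (I • x)})ᗮ := by
  rw [mem_orthogonal_singleton_iff_inner_right] at hy
  have hortho : span ℂ {A x, A (I • x)} ⟂ ℂ ∙ A y := by
    refine isOrtho_span.mpr ?_
    rintro _ (rfl | rfl) _ rfl
    · exact hA _ _ hy
    · exact hA _ _ (by rw [inner_smul_left, hy, mul_zero])
  exact hortho.symm (mem_span_singleton_self _)

theorem PreservesOrthogonality.exists_mem_span_pair_sub_mem_orthogonal (A : H →ₗ[ℝ] K)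
    (hA : PreservesOrthogonality A) (x y : H) :
    ∃ m ∈ span ℝ {A x, A (I • x)}, A y - m ∈ (span ℂ {A x, A (I • x)})ᗮ := by
  obtain ⟨c, hc⟩ := mem_span_singleton.mp ((ℂ ∙ x).starProjection_apply_mem y)
  refine ⟨A (c • x), A.map_complex_smul_mem_span_pair c x, ?_⟩
  rw [hc, ← map_sub]
  exact hA.map_mem_orthogonal_span_pair ((ℂ ∙ x).sub_starProjection_mem_orthogonal y)

theorem Submodule.restrictScalars_le_of_denseRange {α : Type*} {V : Submodule ℂ K}
    [V.HasOrthogonalProjection] {M : Submodule ℝ K} (hM : IsClosed (M : Set K))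
    (hMV : M ≤ V.restrictScalars ℝ) {f : α → K} (hf : DenseRange f)
    (h : ∀ a, ∃ m ∈ M, f a - m ∈ Vᗮ) : V.restrictScalars ℝ ≤ M := by
  have hproj : ∀ z, V.starProjection z ∈ M := fun z =>
    hf.induction_on z (hM.preimage V.starProjection.continuous) fun a => by
      obtain ⟨m, hm, hperp⟩ := h a
      rwa [← sub_add_cancel (f a) m, map_add, V.starProjection_apply_eq_zero_iff.mpr hperp,
        zero_add, starProjection_eq_self_iff.mpr (hMV hm)]
  intro z hz
  simpa [starProjection_eq_self_iff.mpr hz] using hproj z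

end InnerProductSpace

theorem stmt_0_general {H K : Type*} [NormedAddCommGroup H] [InnerProductSpace ℂ H]
    [NormedAddCommGroup K] [InnerProductSpace ℂ K]
    (A : H → K)
    (hadd : ∀ x y, A (x + y) = A x + A y)
    (hreal : ∀ (t : ℝ) (x : H), A (t • x) = t • A x)
    (hdense : DenseRange A)
    (horth : ∀ x y : H, (inner ℂ x y : ℂ) = 0 → (inner ℂ (A x) (A y) : ℂ) = 0)
    (x₀ : H) :
    ∀ c : ℂ, ∃ d : ℂ, A (c • x₀) = d • A x₀ := by
  intro c
  let L : H →ₗ[ℝ] K := { toFun := A, map_add' := hadd, map_smul' := hreal }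
  have : FiniteDimensional ℂ (span ℂ {A x₀, A (I • x₀)}) := .span_of_finite ℂ (Set.toFinite _)
  have : FiniteDimensional ℝ (span ℝ {A x₀, A (I • x₀)}) := .span_of_finite ℝ (Set.toFinite _)
  have hle : (span ℂ {A x₀, A (I • x₀)}).restrictScalars ℝ ≤ span ℝ {A x₀, A (I • x₀)} :=
    restrictScalars_le_of_denseRange (closed_of_finiteDimensional _)
      (span_le_restrictScalars ℝ ℂ _) hdense
      (PreservesOrthogonality.exists_mem_span_pair_sub_mem_orthogonal L horth x₀)
  have hc : A (c • x₀) ∈ ℂ ∙ A x₀ := by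
    rw [show A (c • x₀) = c.re • A x₀ + c.im • A (I • x₀) from L.map_complex_smul c x₀]
    exact add_mem (smul_of_tower_mem _ _ (mem_span_singleton_self _))
      (smul_of_tower_mem _ _ (mem_span_singleton_of_span_pair_le hle))
  obtain ⟨d, hd⟩ := mem_span_singleton.mp hc
  exact ⟨d, hd.symm⟩

theorem stmt_0 {H K : Type*} [NormedAddCommGroup H] [InnerProductSpace ℂ H]
    [NormedAddCommGroup K] [InnerProductSpace ℂ K]
    (A : H → K)
    (hadd : ∀ x y, A (x + y) = A x + A y)
    (hreal : ∀ (t : ℝ) (x : H), A (t • x) = t • A x)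
    (hdense : DenseRange A)
    (horth : ∀ x y : H, (inner ℂ x y : ℂ) = 0 → (inner ℂ (A x) (A y) : ℂ) = 0)
    (x₀ : H) (hx₀ : ‖x₀‖ = 1) :
    ∀ c : ℂ, ∃ d : ℂ, A (c • x₀) = d • A x₀ :=
  stmt_0_general A hadd hreal hdense horth x₀
end

section
/- Let H and K be complex inner product spaces and A : H → K a real-linear map with dense image preserving orthogonality. If x₀ ∈ H has norm one and A(x₀) = 0, then A(i x₀) = 0. -/
/-! Put `v = A (i x₀)`. Writing `y = c x₀ + z` with `z ⟂ x₀`, hence `z ⟂ i x₀`, real-linearity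
gives `A y = (re c) A x₀ + (im c) v + A z`, so `⟪v, A y⟫ = (im c) ‖v‖²` is real. By density and
continuity `⟪v, k⟫` is real for every `k ∈ K`, and `k = i v` yields `‖v‖² = 0`. -/

open Complex

theorem Complex.smul_eq_re_smul_add_im_smul {E : Type*} [AddCommGroup E] [Module ℂ E]
    (c : ℂ) (x : E) : c • x = c.re • x + c.im • (I • x) := by
  conv_lhs => rw [← re_add_im c]
  rw [add_smul, mul_smul, ← coe_smul, ← coe_smul]

theorem exists_eq_smul_add_inner_eq_zero {𝕜 E : Type*} [RCLike 𝕜] [NormedAddCommGroup E]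
    [InnerProductSpace 𝕜 E] (x₀ y : E) :
    ∃ (c : 𝕜) (z : E), y = c • x₀ + z ∧ inner 𝕜 x₀ z = 0 := by
  refine ⟨inner 𝕜 x₀ y / inner 𝕜 x₀ x₀, y - (inner 𝕜 x₀ y / inner 𝕜 x₀ x₀) • x₀,
    (add_sub_cancel _ _).symm, ?_⟩
  rcases eq_or_ne x₀ 0 with rfl | hx₀
  · exact inner_zero_left _
  · rw [inner_sub_right, inner_smul_right, div_mul_cancel₀ _ (inner_self_ne_zero.mpr hx₀),
      sub_self]

section

variable {H K : Type*} [NormedAddCommGroup H] [InnerProductSpace ℂ H]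
  [NormedAddCommGroup K] [InnerProductSpace ℂ K]

theorem inner_map_I_smul_im_eq_zero (A : H →ₗ[ℝ] K)
    (horth : ∀ x y : H, inner ℂ x y = 0 → inner ℂ (A x) (A y) = 0)
    {x₀ : H} (hAx₀ : A x₀ = 0) (y : H) : (inner ℂ (A (I • x₀)) (A y)).im = 0 := by
  obtain ⟨c, z, rfl, hz⟩ := exists_eq_smul_add_inner_eq_zero (𝕜 := ℂ) x₀ y
  have hAz : inner ℂ (A (I • x₀)) (A z) = 0 :=
    horth _ _ (by rw [inner_smul_left, hz, mul_zero])
  have hAy : A (c • x₀ + z) = c.im • A (I • x₀) + A z := by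
    rw [smul_eq_re_smul_add_im_smul c x₀, map_add, map_add, A.map_smul c.re, A.map_smul c.im,
      hAx₀, smul_zero, zero_add]
  rw [hAy, inner_add_right, hAz, add_zero, ← coe_smul, inner_smul_right, mul_im,
    ofReal_im, zero_mul, add_zero]
  exact mul_eq_zero_of_right _ (inner_self_im (𝕜 := ℂ) _)

theorem eq_zero_of_forall_inner_im_eq_zero {v : K} (h : ∀ k, (inner ℂ v k).im = 0) :
    v = 0 := by
  simpa [inner_smul_right, inner_self_eq_norm_sq_to_K, ← ofReal_pow] using h (I • v)

theorem inner_im_eq_zero_of_denseRange {ι : Type*} {f : ι → K} (hf : DenseRange f) {v : K}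
    (h : ∀ i, (inner ℂ v (f i)).im = 0) (k : K) : (inner ℂ v k).im = 0 :=
  hf.induction_on k (isClosed_eq (by fun_prop) continuous_const) h

end

theorem stmt_1_general {H K : Type*} [NormedAddCommGroup H] [InnerProductSpace ℂ H]
    [NormedAddCommGroup K] [InnerProductSpace ℂ K]
    (A : H → K)
    (hadd : ∀ x y, A (x + y) = A x + A y)
    (hreal : ∀ (t : ℝ) (x : H), A (t • x) = t • A x)
    (hdense : DenseRange A)
    (horth : ∀ x y : H, (inner ℂ x y : ℂ) = 0 → (inner ℂ (A x) (A y) : ℂ) = 0)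
    (x₀ : H) (hAx₀ : A x₀ = 0) :
    A (Complex.I • x₀) = 0 := by
  let Aₗ : H →ₗ[ℝ] K := { toFun := A, map_add' := hadd, map_smul' := hreal }
  exact eq_zero_of_forall_inner_im_eq_zero <| inner_im_eq_zero_of_denseRange hdense <|
    inner_map_I_smul_im_eq_zero Aₗ horth hAx₀

theorem stmt_1 {H K : Type*} [NormedAddCommGroup H] [InnerProductSpace ℂ H]
    [NormedAddCommGroup K] [InnerProductSpace ℂ K]
    (A : H → K)
    (hadd : ∀ x y, A (x + y) = A x + A y)
    (hreal : ∀ (t : ℝ) (x : H), A (t • x) = t • A x)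
    (hdense : DenseRange A)
    (horth : ∀ x y : H, (inner ℂ x y : ℂ) = 0 → (inner ℂ (A x) (A y) : ℂ) = 0)
    (x₀ : H) (hx₀ : ‖x₀‖ = 1) (hAx₀ : A x₀ = 0) :
    A (Complex.I • x₀) = 0 :=
  stmt_1_general A hadd hreal hdense horth x₀ hAx₀
end

section
/- Let H, K be complex inner product spaces with dim H ≥ 2, and let A : H → K be a nonzero additive mapping with dense image preserving orthogonality. Then A(x) ≠ 0 for every nonzero x ∈ H. -/
/-!
If `A x = 0` with `x ≠ 0`, then `A` kills every `z ⟂ x`: the vectors `z + x` and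
`z - (‖z‖² / ‖x‖²) • x` are orthogonal, and since `A x = 0` and `A z ⟂ A ((‖z‖² / ‖x‖²) • x)`, the
orthogonality of their images reads `‖A z‖² = 0`. As `dim H ≥ 2` there is such a `z ≠ 0`, and the
same argument applied to `z` shows that `A` kills the line `ℂ ∙ x ⊆ zᗮ` as well. Since
`H = (ℂ ∙ x) ⊔ (ℂ ∙ x)ᗮ`, this forces `A = 0`.
-/

open scoped InnerProductSpace

section OrthogonalityPreserving

variable {𝕜 𝕜' H K : Type*} [RCLike 𝕜] [RCLike 𝕜']
  [NormedAddCommGroup H] [InnerProductSpace 𝕜 H] [NormedAddCommGroup K] [InnerProductSpace 𝕜' K]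
  (A : H →+ K)

theorem AddMonoidHom.map_eq_zero_of_inner_eq_zero
    (hA : ∀ x y : H, ⟪x, y⟫_𝕜 = 0 → ⟪A x, A y⟫_𝕜' = 0) {x z : H} (hx : x ≠ 0) (hAx : A x = 0)
    (hxz : ⟪x, z⟫_𝕜 = 0) : A z = 0 := by
  set w : H := -((‖z‖ ^ 2 / ‖x‖ ^ 2 : ℝ) : 𝕜) • x
  have hzw : ⟪z, w⟫_𝕜 = 0 := by
    rw [inner_smul_right, ← inner_conj_symm, hxz, map_zero, mul_zero]
  have horth : ⟪z + x, z + w⟫_𝕜 = 0 := by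
    have hxn : (‖x‖ : 𝕜) ≠ 0 := RCLike.ofReal_ne_zero.mpr (norm_ne_zero_iff.mpr hx)
    rw [inner_add_left, inner_add_right, inner_add_right, hzw, hxz, add_zero, zero_add]
    simp only [w, inner_smul_right, inner_self_eq_norm_sq_to_K]
    push_cast
    field_simp
    ring
  have h := hA _ _ horth
  rw [map_add, map_add, hAx, add_zero, inner_add_right, hA _ _ hzw, add_zero] at h
  exact inner_self_eq_zero.mp h

theorem AddMonoidHom.eq_zero_of_map_eq_zero
    (hA : ∀ x y : H, ⟪x, y⟫_𝕜 = 0 → ⟪A x, A y⟫_𝕜' = 0) {x : H} (hx : x ≠ 0) (hAx : A x = 0)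
    (hperp : (𝕜 ∙ x)ᗮ ≠ ⊥) : A = 0 := by
  obtain ⟨e, he, he0⟩ := Submodule.exists_mem_ne_zero_of_ne_bot hperp
  rw [Submodule.mem_orthogonal_singleton_iff_inner_right] at he
  have hAe : A e = 0 := A.map_eq_zero_of_inner_eq_zero hA hx hAx he
  ext v
  obtain ⟨y, hy, z, hz, rfl⟩ := (𝕜 ∙ x).exists_add_mem_mem_orthogonal v
  obtain ⟨t, rfl⟩ := Submodule.mem_span_singleton.mp hy
  rw [Submodule.mem_orthogonal_singleton_iff_inner_right] at hz
  have hey : ⟪e, t • x⟫_𝕜 = 0 := by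
    rw [inner_smul_right, ← inner_conj_symm, he, map_zero, mul_zero]
  rw [map_add, A.map_eq_zero_of_inner_eq_zero hA he0 hAe hey,
    A.map_eq_zero_of_inner_eq_zero hA hx hAx hz, add_zero, AddMonoidHom.zero_apply]

end OrthogonalityPreserving

theorem Submodule.orthogonal_span_singleton_ne_bot {𝕜 H : Type*} [RCLike 𝕜]
    [NormedAddCommGroup H] [InnerProductSpace 𝕜 H] (hdim : 2 ≤ Module.rank 𝕜 H) (x : H) :
    (𝕜 ∙ x)ᗮ ≠ ⊥ := by
  rw [Ne, Submodule.orthogonal_eq_bot_iff]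
  intro htop
  have hle := rank_span_le (R := 𝕜) ({x} : Set H)
  rw [htop, rank_top, Cardinal.mk_singleton] at hle
  exact absurd (hdim.trans hle) (by norm_num)

theorem stmt_3_general {H K : Type*} [NormedAddCommGroup H] [InnerProductSpace ℂ H]
    [NormedAddCommGroup K] [InnerProductSpace ℂ K]
    (hdim : 2 ≤ Module.rank ℂ H)
    (A : H → K) (hA : A ≠ 0)
    (hadd : ∀ x y, A (x + y) = A x + A y)
    (horth : ∀ x y : H, (inner ℂ x y : ℂ) = 0 → (inner ℂ (A x) (A y) : ℂ) = 0) :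
    ∀ x : H, x ≠ 0 → A x ≠ 0 := by
  intro x hx hAx
  have hA' := (AddMonoidHom.mk' A hadd).eq_zero_of_map_eq_zero horth hx hAx
    (Submodule.orthogonal_span_singleton_ne_bot hdim x)
  exact hA (congrArg DFunLike.coe hA')

theorem stmt_3 {H K : Type*} [NormedAddCommGroup H] [InnerProductSpace ℂ H]
    [NormedAddCommGroup K] [InnerProductSpace ℂ K]
    (hdim : 2 ≤ Module.rank ℂ H)
    (A : H → K) (hA : A ≠ 0)
    (hadd : ∀ x y, A (x + y) = A x + A y)
    (hdense : DenseRange A)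
    (horth : ∀ x y : H, (inner ℂ x y : ℂ) = 0 → (inner ℂ (A x) (A y) : ℂ) = 0) :
    ∀ x : H, x ≠ 0 → A x ≠ 0 :=
  stmt_3_general hdim A hA hadd horth
end

section
/- Let H, K be complex inner product spaces with dim H ≥ 2 and let A : H → K be a nonzero additive mapping with dense image preserving orthogonality. Then A is either complex-linear or conjugate-linear. -/
/-!
If `‖x‖ = 1` and `⟪x, w⟫ = 0`, the vectors `x + μ • w` and `-(conj μ * β * ⟪w, w⟫) • x + β • w`
are orthogonal; applying `A` and expanding shows that `⟪A (μ • w), A (β • w)⟫` depends only on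
`conj μ * β * ⟪w, w⟫`. With two orthonormal vectors at hand this yields `⟪A u, A v⟫ = φ ⟪u, v⟫`
for an additive `φ : ℂ → ℂ`, which is nonnegative on `[0, ∞)` and hence `ℝ`-linear there. So `A`
is a multiple of an isometry, thus continuous and `ℝ`-linear, and `φ c = r * re c + b * im c * I`
with `|b| ≤ r` by Cauchy–Schwarz. Approximating `I • A e` by values of `A` forces `r ≤ |b|`, and
`b = ± r` says that `⟪A u, A v⟫` is `r * ⟪u, v⟫` or its conjugate, which makes `A` linear or
conjugate-linear.
-/

open scoped InnerProductSpace ComplexConjugate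
open Complex (I)

theorem AddMonoidHom.real_apply_eq_mul_of_nonneg (g : ℝ →+ ℝ) (hg : ∀ t, 0 ≤ t → 0 ≤ g t)
    (t : ℝ) : g t = t * g 1 := by
  have hmono : Monotone g := fun a b hab => by
    simpa only [map_sub, sub_nonneg] using hg (b - a) (sub_nonneg.mpr hab)
  have hrat (q : ℚ) : g q = q * g 1 := by
    simpa using map_ratCast_smul g ℝ ℝ q 1
  obtain h0 | hpos := (hg 1 zero_le_one).eq_or_lt
  · obtain ⟨q, hq⟩ := exists_rat_gt t
    obtain ⟨q', hq'⟩ := exists_rat_lt t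
    have hle := hmono hq.le
    have hge := hmono hq'.le
    rw [hrat, ← h0, mul_zero] at hle hge
    rw [← h0, mul_zero]
    linarith
  · refine le_antisymm ?_ ?_
    · rw [← div_le_iff₀ hpos]
      refine le_of_forall_lt_rat_imp_le fun q htq => ?_
      rw [div_le_iff₀ hpos, ← hrat]
      exact hmono htq.le
    · rw [← le_div_iff₀ hpos]
      refine le_of_forall_rat_lt_imp_le fun q hqt => ?_
      rw [le_div_iff₀ hpos, ← hrat]
      exact hmono hqt.le

section

variable {H K : Type*} [NormedAddCommGroup H] [InnerProductSpace ℂ H]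
  [NormedAddCommGroup K] [InnerProductSpace ℂ K]

theorem exists_norm_eq_one_inner_eq_zero (hdim : 2 ≤ Module.rank ℂ H) (x : H) :
    ∃ y : H, ‖y‖ = 1 ∧ ⟪x, y⟫_ℂ = 0 := by
  have hspan : (ℂ ∙ x) ≠ ⊤ := fun htop => by
    have := (rank_span_le (R := ℂ) ({x} : Set H)).trans_eq (Cardinal.mk_singleton x)
    rw [htop, rank_top] at this
    exact absurd (hdim.trans this) (by norm_num)
  obtain ⟨y, hy, hy0⟩ :=
    Submodule.exists_mem_ne_zero_of_ne_bot (mt Submodule.orthogonal_eq_bot_iff.mp hspan)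
  refine ⟨(‖y‖⁻¹ : ℂ) • y, norm_smul_inv_norm hy0, ?_⟩
  rw [inner_smul_right, Submodule.mem_orthogonal_singleton_iff_inner_right.mp hy, mul_zero]

theorem map_smul_of_inner_map_map_eq {f : H → K} {r : ℂ} {σ : ℂ →+* ℂ}
    (hσ : ∀ c, σ (conj c) = conj (σ c)) (hf : ∀ u v, ⟪f u, f v⟫_ℂ = r * σ ⟪u, v⟫_ℂ)
    (c : ℂ) (u : H) : f (c • u) = σ c • f u := by
  rw [← sub_eq_zero, ← inner_self_eq_zero (𝕜 := ℂ)]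
  simp only [inner_sub_left, inner_sub_right, inner_smul_left, inner_smul_right, hf, map_mul, hσ]
  ring

section Orthogonality

variable (f : H →+ K) (hf : ∀ x y : H, ⟪x, y⟫_ℂ = 0 → ⟪f x, f y⟫_ℂ = 0)
include hf

theorem inner_map_smul_map_smul_of_inner_eq_zero {x w : H} (hx : ‖x‖ = 1) (hxw : ⟪x, w⟫_ℂ = 0)
    (μ β : ℂ) :
    ⟪f (μ • w), f (β • w)⟫_ℂ = ⟪f x, f ((conj μ * β * ⟪w, w⟫_ℂ) • x)⟫_ℂ := by
  set c := conj μ * β * ⟪w, w⟫_ℂ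
  have hwx : ⟪w, x⟫_ℂ = 0 := inner_eq_zero_symm.mp hxw
  have h := hf (x + μ • w) (-c • x + β • w) (by
    simp only [inner_add_left, inner_add_right, inner_smul_left, inner_smul_right, hxw, hwx,
      inner_self_eq_one_of_norm_eq_one hx, c]
    ring)
  rw [map_add, map_add, inner_add_left, inner_add_right, inner_add_right,
    hf x (β • w) (by rw [inner_smul_right, hxw, mul_zero]),
    hf (μ • w) (-c • x) (by rw [inner_smul_right, inner_smul_left, hwx, mul_zero, mul_zero]),
    neg_smul, map_neg, inner_neg_right] at h
  linear_combination h

theorem inner_map_map_eq_of_inner_eq_zero {x u : H} (hx : ‖x‖ = 1) (hxu : ⟪x, u⟫_ℂ = 0)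
    (v : H) : ⟪f u, f v⟫_ℂ = ⟪f x, f (⟪u, v⟫_ℂ • x)⟫_ℂ := by
  set p := ⟪u, v⟫_ℂ / ⟪u, u⟫_ℂ
  have hp : p * ⟪u, u⟫_ℂ = ⟪u, v⟫_ℂ :=
    div_mul_cancel_of_imp fun h => by rw [inner_self_eq_zero.mp h, inner_zero_left]
  have hperp : ⟪u, v - p • u⟫_ℂ = 0 := by
    rw [inner_sub_right, inner_smul_right, hp, sub_self]
  calc ⟪f u, f v⟫_ℂ = ⟪f u, f (p • u)⟫_ℂ := by
        rw [← add_sub_cancel (p • u) v, map_add, inner_add_right, hf _ _ hperp, add_zero]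
    _ = ⟪f x, f (⟪u, v⟫_ℂ • x)⟫_ℂ := by
        simpa only [one_smul, map_one, one_mul, hp] using
          inner_map_smul_map_smul_of_inner_eq_zero f hf hx hxu 1 p

theorem inner_map_map_eq_inner_map_smul {e e' : H} (he : ‖e‖ = 1) (he' : ‖e'‖ = 1)
    (hee' : ⟪e, e'⟫_ℂ = 0) (u v : H) : ⟪f u, f v⟫_ℂ = ⟪f e, f (⟪u, v⟫_ℂ • e)⟫_ℂ := by
  set a := ⟪e, u⟫_ℂ
  have h_e' (c : ℂ) : ⟪f e', f (c • e')⟫_ℂ = ⟪f e, f (c • e)⟫_ℂ := by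
    rw [inner_map_map_eq_of_inner_eq_zero f hf he hee', inner_smul_right,
      inner_self_eq_one_of_norm_eq_one he', mul_one]
  have h₁ : ⟪f (a • e), f v⟫_ℂ = ⟪f e, f (⟪a • e, v⟫_ℂ • e)⟫_ℂ := by
    rw [inner_map_map_eq_of_inner_eq_zero f hf he'
      (by rw [inner_smul_right, inner_eq_zero_symm.mp hee', mul_zero]), h_e']
  have h₂ : ⟪f (u - a • e), f v⟫_ℂ = ⟪f e, f (⟪u - a • e, v⟫_ℂ • e)⟫_ℂ :=
    inner_map_map_eq_of_inner_eq_zero f hf he (by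
      rw [inner_sub_right, inner_smul_right, inner_self_eq_one_of_norm_eq_one he, mul_one,
        sub_self]) v
  rw [← add_sub_cancel (a • e) u, map_add, inner_add_left, h₁, h₂, ← inner_add_right, ← map_add,
    ← add_smul, ← inner_add_left]

theorem exists_addMonoidHom_inner_map_map (hdim : 2 ≤ Module.rank ℂ H) :
    ∃ φ : ℂ →+ ℂ, ∀ u v, ⟪f u, f v⟫_ℂ = φ ⟪u, v⟫_ℂ := by
  obtain ⟨e, he, -⟩ := exists_norm_eq_one_inner_eq_zero hdim 0
  obtain ⟨e', he', hee'⟩ := exists_norm_eq_one_inner_eq_zero hdim e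
  exact ⟨AddMonoidHom.mk' (fun c => ⟪f e, f (c • e)⟫_ℂ) fun c d => by
    rw [add_smul, map_add, inner_add_right], inner_map_map_eq_inner_map_smul f hf he he' hee'⟩

end Orthogonality

section GramForm

variable {f : H →+ K} {φ : ℂ →+ ℂ} (hφ : ∀ u v, ⟪f u, f v⟫_ℂ = φ ⟪u, v⟫_ℂ)

section UnitVector

variable {e : H} (he : ‖e‖ = 1)
include hφ he

theorem apply_eq_inner_map_map_smul (c : ℂ) : φ c = ⟪f e, f (c • e)⟫_ℂ := by
  rw [hφ, inner_smul_right, inner_self_eq_one_of_norm_eq_one he, mul_one]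

theorem apply_conj_eq_conj_apply (c : ℂ) : φ (conj c) = conj (φ c) := by
  rw [apply_eq_inner_map_map_smul hφ he c, inner_conj_symm, hφ, inner_smul_left,
    inner_self_eq_one_of_norm_eq_one he, mul_one]

theorem apply_ofReal (t : ℝ) : φ t = ((t * ‖f e‖ ^ 2 : ℝ) : ℂ) := by
  let g : ℝ →+ ℝ := Complex.reAddGroupHom.comp (φ.comp Complex.ofRealHom.toAddMonoidHom)
  have hg (s : ℝ) (hs : 0 ≤ s) : 0 ≤ g s := by
    have hs' : (s : ℂ) = ⟪(√s : ℂ) • e, (√s : ℂ) • e⟫_ℂ := by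
      rw [inner_smul_left, inner_smul_right, inner_self_eq_one_of_norm_eq_one he,
        Complex.conj_ofReal, mul_one, ← Complex.ofReal_mul, Real.mul_self_sqrt hs]
    change 0 ≤ (φ s).re
    rw [hs', ← hφ]
    exact inner_self_nonneg (𝕜 := ℂ)
  have hg1 : g 1 = ‖f e‖ ^ 2 := by
    change (φ ((1 : ℝ) : ℂ)).re = _
    rw [Complex.ofReal_one, ← inner_self_eq_one_of_norm_eq_one (𝕜 := ℂ) he, ← hφ]
    exact inner_self_eq_norm_sq (𝕜 := ℂ) _
  have hre : (φ t).re = t * ‖f e‖ ^ 2 := by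
    rw [← hg1]
    exact g.real_apply_eq_mul_of_nonneg hg t
  have him : (φ t).im = 0 :=
    Complex.conj_eq_iff_im.mp (by rw [← apply_conj_eq_conj_apply hφ he, Complex.conj_ofReal])
  exact Complex.ext (by rw [hre, Complex.ofReal_re]) (by rw [him, Complex.ofReal_im])

theorem norm_map_eq_mul_norm (u : H) : ‖f u‖ = ‖f e‖ * ‖u‖ := by
  have h : ‖f u‖ ^ 2 = (‖f e‖ * ‖u‖) ^ 2 := by
    calc ‖f u‖ ^ 2 = (⟪f u, f u⟫_ℂ).re := (inner_self_eq_norm_sq (𝕜 := ℂ) _).symm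
      _ = (φ ((‖u‖ ^ 2 : ℝ) : ℂ)).re := by rw [hφ, inner_self_eq_norm_sq_to_K]; norm_cast
      _ = (‖f e‖ * ‖u‖) ^ 2 := by rw [apply_ofReal hφ he, Complex.ofReal_re]; ring
  exact (pow_left_inj₀ (norm_nonneg _) (by positivity) two_ne_zero).mp h

theorem apply_eq_re_add_im (c : ℂ) :
    φ c = ‖f e‖ ^ 2 * c.re + (φ I).im * c.im * I := by
  have hf : Continuous f := AddMonoidHomClass.continuous_of_bound f ‖f e‖ fun u =>
    (norm_map_eq_mul_norm hφ he u).le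
  have hφc : Continuous φ := by
    rw [show ⇑φ = fun c => ⟪f e, f (c • e)⟫_ℂ from funext (apply_eq_inner_map_map_smul hφ he)]
    fun_prop
  have hI : (φ I).re = 0 := by
    have h := congrArg Complex.re (apply_conj_eq_conj_apply hφ he I)
    rw [Complex.conj_I, map_neg, Complex.neg_re, Complex.conj_re] at h
    linarith
  have hc : c = c.re • (1 : ℂ) + c.im • I := by simp
  rw [hc, map_add, map_real_smul φ hφc, map_real_smul φ hφc]
  have h1 : φ 1 = ‖f e‖ ^ 2 := by simpa using apply_ofReal hφ he 1
  apply Complex.ext <;> simp [h1, hI] <;> ring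

theorem abs_im_apply_I_le : |(φ I).im| ≤ ‖f e‖ ^ 2 :=
  calc |(φ I).im| ≤ ‖⟪f e, f (I • e)⟫_ℂ‖ := by
        rw [← apply_eq_inner_map_map_smul hφ he]
        exact Complex.abs_im_le_norm _
    _ ≤ ‖f e‖ * ‖f (I • e)‖ := norm_inner_le_norm _ _
    _ = ‖f e‖ ^ 2 := by rw [norm_map_eq_mul_norm hφ he (I • e), norm_smul, Complex.norm_I, he]; ring

theorem le_abs_im_apply_I (hdense : DenseRange f) : ‖f e‖ ^ 2 ≤ |(φ I).im| := by
  have hbound (z : K) : |(⟪f e, z⟫_ℂ).im| * ‖f e‖ ≤ |(φ I).im| * ‖z‖ := by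
    refine hdense.induction_on z (isClosed_le (by fun_prop) (by fun_prop)) fun v => ?_
    have hv : |(⟪e, v⟫_ℂ).im| ≤ ‖v‖ :=
      (Complex.abs_im_le_norm _).trans ((norm_inner_le_norm e v).trans_eq (by rw [he, one_mul]))
    have him : (⟪f e, f v⟫_ℂ).im = (φ I).im * (⟪e, v⟫_ℂ).im := by
      rw [hφ, apply_eq_re_add_im hφ he]
      simp [← Complex.ofReal_pow]
    rw [him, norm_map_eq_mul_norm hφ he v, abs_mul, mul_assoc, mul_comm ‖f e‖ ‖v‖]
    gcongr
  have h := hbound (I • f e)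
  have him : (⟪f e, I • f e⟫_ℂ).im = ‖f e‖ ^ 2 := by
    rw [inner_smul_right, Complex.mul_im, Complex.I_re, Complex.I_im, zero_mul, one_mul, zero_add]
    exact inner_self_eq_norm_sq (𝕜 := ℂ) _
  rw [him, abs_of_nonneg (by positivity), norm_smul, Complex.norm_I, one_mul] at h
  rcases (norm_nonneg (f e)).eq_or_lt with h0 | hpos
  · rw [← h0]
    simp
  · exact le_of_mul_le_mul_right h hpos

end UnitVector

include hφ in
theorem map_smul_or_map_smul_conj (hdense : DenseRange f) (hf0 : f ≠ 0) :
    (∀ (c : ℂ) (u : H), f (c • u) = c • f u) ∨ ∀ (c : ℂ) (u : H), f (c • u) = conj c • f u := by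
  obtain ⟨u, hu⟩ := DFunLike.ne_iff.mp hf0
  have hu0 : u ≠ 0 := by
    rintro rfl
    exact hu (map_zero f)
  set e := (‖u‖⁻¹ : ℂ) • u
  have he : ‖e‖ = 1 := norm_smul_inv_norm hu0
  have hr : 0 < ‖f e‖ ^ 2 := by
    have : ‖f e‖ ≠ 0 := fun h0 =>
      hu (norm_eq_zero.mp (by rw [norm_map_eq_mul_norm hφ he u, h0, zero_mul]))
    positivity
  have hb := le_antisymm (abs_im_apply_I_le hφ he) (le_abs_im_apply_I hφ he hdense)
  rcases (abs_eq hr.le).mp hb with hb | hb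
  · refine .inl (map_smul_of_inner_map_map_eq (σ := RingHom.id ℂ) (r := ‖f e‖ ^ 2)
      (fun _ => rfl) fun u v => ?_)
    rw [hφ, apply_eq_re_add_im hφ he, hb]
    conv_rhs => rw [← Complex.re_add_im ⟪u, v⟫_ℂ]
    simp only [RingHom.id_apply, Complex.ofReal_pow]
    ring
  · refine .inr (map_smul_of_inner_map_map_eq (σ := starRingEnd ℂ) (r := ‖f e‖ ^ 2)
      (fun _ => rfl) fun u v => ?_)
    rw [hφ, apply_eq_re_add_im hφ he, hb]
    apply Complex.ext <;> simp [← Complex.ofReal_pow, -inner_conj_symm]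

end GramForm

end

theorem stmt_5 {H K : Type*} [NormedAddCommGroup H] [InnerProductSpace ℂ H]
    [NormedAddCommGroup K] [InnerProductSpace ℂ K]
    (hdim : 2 ≤ Module.rank ℂ H)
    (A : H → K) (hA : A ≠ 0)
    (hadd : ∀ x y, A (x + y) = A x + A y)
    (hdense : DenseRange A)
    (horth : ∀ x y : H, (inner ℂ x y : ℂ) = 0 → (inner ℂ (A x) (A y) : ℂ) = 0) :
    (∀ (c : ℂ) (x : H), A (c • x) = c • A x) ∨
      (∀ (c : ℂ) (x : H), A (c • x) = (starRingEnd ℂ c) • A x) := by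
  let f := AddMonoidHom.mk' A hadd
  obtain ⟨φ, hφ⟩ := exists_addMonoidHom_inner_map_map f horth hdim
  exact map_smul_or_map_smul_conj hφ hdense fun h => hA (congrArg DFunLike.coe h)
end

section
/- Let X be a complex normed space and τ : X → X a conjugation (a period-2 conjugate-linear isometry). Let X^τ = {x ∈ X : τ(x) = x}. Then for x, y ∈ X^τ, x is Birkhoff orthogonal to y in the real normed space X^τ if and only if x is Birkhoff orthogonal to y in X. -/
/-! The conjugation fixes `x` and `y`, so it maps `x + α • y` to `x + conj α • y` and these two
vectors have the same norm. Their midpoint is `x + (re α) • y`, so by convexity of the norm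
`‖x + α • y‖ ≥ ‖x + (re α) • y‖ ≥ ‖x‖` whenever `x` is Birkhoff orthogonal to `y` over `ℝ`. -/

open ComplexConjugate

section Birkhoff

variable {X : Type*} [NormedAddCommGroup X] [NormedSpace ℂ X]

theorem Complex.norm_add_re_smul_le (x y : X) (α : ℂ) :
    ‖x + α.re • y‖ ≤ (‖x + α • y‖ + ‖x + conj α • y‖) / 2 := by
  have hmid : x + α.re • y = (2 : ℝ)⁻¹ • ((x + α • y) + (x + conj α • y)) := by
    rw [← Complex.coe_smul, Complex.re_eq_add_conj]
    module
  calc ‖x + α.re • y‖ = ‖(x + α • y) + (x + conj α • y)‖ / 2 := by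
        rw [hmid, norm_smul]; norm_num; ring
    _ ≤ (‖x + α • y‖ + ‖x + conj α • y‖) / 2 := by gcongr; exact norm_add_le _ _

theorem birkhoff_real_iff_complex_of_norm_conj_smul {x y : X}
    (hsymm : ∀ α : ℂ, ‖x + conj α • y‖ = ‖x + α • y‖) :
    (∀ t : ℝ, ‖x‖ ≤ ‖x + t • y‖) ↔ (∀ α : ℂ, ‖x‖ ≤ ‖x + α • y‖) := by
  refine ⟨fun h α => ?_, fun h t => ?_⟩
  · calc ‖x‖ ≤ ‖x + α.re • y‖ := h α.re
      _ ≤ (‖x + α • y‖ + ‖x + conj α • y‖) / 2 := Complex.norm_add_re_smul_le x y α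
      _ = ‖x + α • y‖ := by rw [hsymm]; ring
  · simpa only [Complex.coe_smul] using h t

theorem norm_add_conj_smul_of_conjugation (τ : X → X)
    (hadd : ∀ x y, τ (x + y) = τ x + τ y)
    (hconj : ∀ (c : ℂ) (x : X), τ (c • x) = conj c • τ x)
    (hiso : ∀ x, ‖τ x‖ = ‖x‖) {x y : X} (hx : τ x = x) (hy : τ y = y) (α : ℂ) :
    ‖x + conj α • y‖ = ‖x + α • y‖ := by
  rw [← hiso (x + α • y), hadd, hconj, hx, hy]

end Birkhoff

theorem stmt_10_general {X : Type*} [NormedAddCommGroup X] [NormedSpace ℂ X]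
    (τ : X → X)
    (hadd : ∀ x y, τ (x + y) = τ x + τ y)
    (hconj : ∀ (c : ℂ) (x : X), τ (c • x) = (starRingEnd ℂ c) • τ x)
    (hiso : ∀ x, ‖τ x‖ = ‖x‖)
    (x y : X) (hx : τ x = x) (hy : τ y = y) :
    (∀ t : ℝ, ‖x‖ ≤ ‖x + t • y‖) ↔ (∀ α : ℂ, ‖x‖ ≤ ‖x + α • y‖) :=
  birkhoff_real_iff_complex_of_norm_conj_smul
    (norm_add_conj_smul_of_conjugation τ hadd hconj hiso hx hy)

theorem stmt_10 {X : Type*} [NormedAddCommGroup X] [NormedSpace ℂ X]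
    (τ : X → X)
    (hadd : ∀ x y, τ (x + y) = τ x + τ y)
    (hconj : ∀ (c : ℂ) (x : X), τ (c • x) = (starRingEnd ℂ c) • τ x)
    (hiso : ∀ x, ‖τ x‖ = ‖x‖)
    (hinv : ∀ x, τ (τ x) = x)
    (x y : X) (hx : τ x = x) (hy : τ y = y) :
    (∀ t : ℝ, ‖x‖ ≤ ‖x + t • y‖) ↔ (∀ α : ℂ, ‖x‖ ≤ ‖x + α • y‖) :=
  stmt_10_general τ hadd hconj hiso x y hx hy
end

section
/- Let X be a complex normed space with a conjugation τ and let τ^♯ : X* → X* be defined by τ^♯(φ)(x) = conj(φ(τ(x))). Then τ^♯ is a conjugation on X*, and the restriction map from the fixed-point set (X*)^{τ^♯} to (X^τ)*, φ ↦ φ|_{X^τ}, is a surjective real-linear isometry. -/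
/-!
A complex functional `φ` is determined by its real part `re ∘ φ`, which has the same norm
(`StrongDual.extendRCLikeₗᵢ`). Hence `φ` is fixed by `τ^♯` iff `re ∘ φ` is `τ`-invariant, and then
`re ∘ φ = (re ∘ φ)|_{X^τ} ∘ P` for the projection `P x = (x + τ x) / 2` onto `X^τ`, which has norm
at most one; this makes restriction isometric. Conversely, for `g ∈ (X^τ)*` the complex functional
with real part `g ∘ P` is `τ^♯`-fixed and restricts to `g`.
-/

open ComplexConjugate StrongDual

section

variable {X : Type*} [NormedAddCommGroup X] [NormedSpace ℂ X]

structure IsConjugation (τ : X → X) : Prop where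
  map_add : ∀ x y, τ (x + y) = τ x + τ y
  map_smul : ∀ (c : ℂ) (x : X), τ (c • x) = conj c • τ x
  norm_map : ∀ x, ‖τ x‖ = ‖x‖
  involutive : ∀ x, τ (τ x) = x

-- A complex functional is determined by its real part.
theorem dual_eq_self_iff {τ : X → X} {Ts : (X →L[ℂ] ℂ) → (X →L[ℂ] ℂ)}
    (hTs : ∀ (φ : X →L[ℂ] ℂ) (x : X), Ts φ x = conj (φ (τ x))) (φ : X →L[ℂ] ℂ) :
    Ts φ = φ ↔ ∀ x, (φ (τ x)).re = (φ x).re := by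
  refine ⟨fun h x => by rw [← Complex.conj_re, ← hTs, h], fun h => ?_⟩
  apply (extendRCLikeₗᵢ (𝕜 := ℂ) (F := X)).symm.injective
  ext x
  simp [extendRCLikeₗᵢ_symm_apply, hTs, h]

namespace IsConjugation

variable {τ : X → X}

theorem map_real_smul (hτ : IsConjugation τ) (r : ℝ) (x : X) : τ (r • x) = r • τ x := by
  rw [← Complex.coe_smul, hτ.map_smul, Complex.conj_ofReal, Complex.coe_smul]

theorem map_I_smul (hτ : IsConjugation τ) (x : X) : τ (Complex.I • x) = -(Complex.I • τ x) := by
  rw [hτ.map_smul, Complex.conj_I, neg_smul]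

def fixedSubmodule (hτ : IsConjugation τ) : Submodule ℝ X where
  carrier := {x | τ x = x}
  add_mem' {x y} hx hy := by simp_all [hτ.map_add]
  zero_mem' := by simpa using hτ.map_real_smul 0 0
  smul_mem' r x hx := by simp_all [hτ.map_real_smul]

theorem mem_fixedSubmodule (hτ : IsConjugation τ) {x : X} :
    x ∈ hτ.fixedSubmodule ↔ τ x = x :=
  Iff.rfl

theorem norm_midpoint_le (hτ : IsConjugation τ) (x : X) : ‖(2⁻¹ : ℝ) • (x + τ x)‖ ≤ ‖x‖ :=
  calc ‖(2⁻¹ : ℝ) • (x + τ x)‖ = 2⁻¹ * ‖x + τ x‖ := by rw [norm_smul]; norm_num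
    _ ≤ 2⁻¹ * (‖x‖ + ‖τ x‖) := by gcongr; exact norm_add_le _ _
    _ = ‖x‖ := by rw [hτ.norm_map]; ring

noncomputable def fixedPart (hτ : IsConjugation τ) : X →L[ℝ] hτ.fixedSubmodule :=
  LinearMap.mkContinuous
    { toFun x := ⟨(2⁻¹ : ℝ) • (x + τ x), by
        rw [hτ.mem_fixedSubmodule, hτ.map_real_smul, hτ.map_add, hτ.involutive, add_comm]⟩
      map_add' x y := by ext; simp only [hτ.map_add, Submodule.coe_add]; module
      map_smul' r x := by
        ext; simp only [hτ.map_real_smul, RingHom.id_apply, SetLike.val_smul]; module }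
    1 (fun x => by simpa using hτ.norm_midpoint_le x)

theorem coe_fixedPart_apply (hτ : IsConjugation τ) (x : X) :
    (hτ.fixedPart x : X) = (2⁻¹ : ℝ) • (x + τ x) :=
  rfl

theorem norm_fixedPart_le (hτ : IsConjugation τ) : ‖hτ.fixedPart‖ ≤ 1 :=
  LinearMap.mkContinuous_norm_le _ zero_le_one _

theorem fixedPart_map (hτ : IsConjugation τ) (x : X) : hτ.fixedPart (τ x) = hτ.fixedPart x := by
  ext; simp only [coe_fixedPart_apply, hτ.involutive, add_comm]

theorem fixedPart_coe (hτ : IsConjugation τ) (s : hτ.fixedSubmodule) : hτ.fixedPart s = s := by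
  ext; rw [coe_fixedPart_apply, s.2]; module

theorem fixedPart_I_smul_coe (hτ : IsConjugation τ) (s : hτ.fixedSubmodule) :
    hτ.fixedPart (Complex.I • (s : X)) = 0 := by
  ext; rw [coe_fixedPart_apply, hτ.map_I_smul, s.2]; simp

theorem dual {Ts : (X →L[ℂ] ℂ) → (X →L[ℂ] ℂ)} (hτ : IsConjugation τ)
    (hTs : ∀ (φ : X →L[ℂ] ℂ) (x : X), Ts φ x = conj (φ (τ x))) : IsConjugation Ts := by
  have involutive : ∀ φ, Ts (Ts φ) = φ := fun φ => by ext x; simp [hTs, hτ.involutive]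
  have norm_le : ∀ φ, ‖Ts φ‖ ≤ ‖φ‖ := fun φ =>
    ContinuousLinearMap.opNorm_le_bound _ (norm_nonneg φ) fun x => by
      simpa [hTs, hτ.norm_map] using φ.le_opNorm (τ x)
  refine ⟨fun φ ψ => ?_, fun c φ => ?_, fun φ => ?_, involutive⟩
  · ext x; simp [hTs]
  · ext x; simp [hTs]
  · exact (norm_le φ).antisymm (by simpa [involutive] using norm_le (Ts φ))

theorem re_apply_fixedPart (hτ : IsConjugation τ) {φ : X →L[ℂ] ℂ}
    (hφ : ∀ x, (φ (τ x)).re = (φ x).re) (x : X) : (φ (hτ.fixedPart x)).re = (φ x).re := by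
  rw [coe_fixedPart_apply, ← Complex.coe_smul, φ.map_smul, φ.map_add, smul_eq_mul,
    Complex.re_ofReal_mul, Complex.add_re, hφ]
  ring

theorem norm_re_comp_subtypeL (hτ : IsConjugation τ) {φ : X →L[ℂ] ℂ}
    (hφ : ∀ x, (φ (τ x)).re = (φ x).re) :
    ‖(RCLike.reCLM.comp (φ.restrictScalars ℝ)).comp hτ.fixedSubmodule.subtypeL‖ = ‖φ‖ := by
  set ψ := RCLike.reCLM.comp (φ.restrictScalars ℝ)
  have hψ : ‖ψ‖ = ‖φ‖ := (extendRCLikeₗᵢ (𝕜 := ℂ) (F := X)).symm.norm_map φ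
  have hfactor : ψ = (ψ.comp hτ.fixedSubmodule.subtypeL).comp hτ.fixedPart := by
    ext x; simp [ψ, hτ.re_apply_fixedPart hφ]
  refine le_antisymm ?_ ?_
  · calc _ ≤ ‖ψ‖ * ‖hτ.fixedSubmodule.subtypeL‖ := ψ.opNorm_comp_le _
      _ ≤ ‖φ‖ := by
        rw [hψ]; exact mul_le_of_le_one_right (norm_nonneg _) (Submodule.norm_subtypeL_le _)
  · calc ‖φ‖ = ‖(ψ.comp hτ.fixedSubmodule.subtypeL).comp hτ.fixedPart‖ := by rw [← hfactor, hψ]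
      _ ≤ ‖ψ.comp hτ.fixedSubmodule.subtypeL‖ * ‖hτ.fixedPart‖ :=
        ContinuousLinearMap.opNorm_comp_le _ _
      _ ≤ _ := mul_le_of_le_one_right (ContinuousLinearMap.opNorm_nonneg _) hτ.norm_fixedPart_le

theorem re_extendRCLike_comp_fixedPart_map (hτ : IsConjugation τ)
    (g : hτ.fixedSubmodule →L[ℝ] ℝ) (x : X) :
    (extendRCLike (𝕜 := ℂ) (g.comp hτ.fixedPart) (τ x)).re =
      (extendRCLike (𝕜 := ℂ) (g.comp hτ.fixedPart) x).re := by
  simp only [← RCLike.re_to_complex, re_extendRCLike_apply, ContinuousLinearMap.comp_apply,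
    hτ.fixedPart_map]

theorem extendRCLike_comp_fixedPart_apply_coe (hτ : IsConjugation τ)
    (g : hτ.fixedSubmodule →L[ℝ] ℝ) (s : hτ.fixedSubmodule) :
    extendRCLike (𝕜 := ℂ) (g.comp hτ.fixedPart) s = g s := by
  simp [extendRCLike_apply, hτ.fixedPart_coe, hτ.fixedPart_I_smul_coe]

end IsConjugation

end

theorem stmt_14 {X : Type*} [NormedAddCommGroup X] [NormedSpace ℂ X]
    (τ : X → X)
    (hadd : ∀ x y, τ (x + y) = τ x + τ y)
    (hconj : ∀ (c : ℂ) (x : X), τ (c • x) = (starRingEnd ℂ c) • τ x)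
    (hiso : ∀ x, ‖τ x‖ = ‖x‖)
    (hinv : ∀ x, τ (τ x) = x)
    (S : Submodule ℝ X) (hS : ∀ x, x ∈ S ↔ τ x = x)
    (Ts : (X →L[ℂ] ℂ) → (X →L[ℂ] ℂ))
    (hTs : ∀ (φ : X →L[ℂ] ℂ) (x : X), Ts φ x = starRingEnd ℂ (φ (τ x))) :
    -- Ts is a conjugation on X*
    ((∀ φ ψ, Ts (φ + ψ) = Ts φ + Ts ψ) ∧
      (∀ (c : ℂ) (φ : X →L[ℂ] ℂ), Ts (c • φ) = (starRingEnd ℂ c) • Ts φ) ∧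
      (∀ φ, ‖Ts φ‖ = ‖φ‖) ∧ (∀ φ, Ts (Ts φ) = φ)) ∧
    -- the restriction map from the fixed points of Ts to (X^τ)* is a
    -- (real-linear) isometry:
    (∀ φ : X →L[ℂ] ℂ, Ts φ = φ →
      ∃ g : S →L[ℝ] ℝ, (∀ s : S, ((g s : ℝ) : ℂ) = φ (s : X)) ∧ ‖g‖ = ‖φ‖) ∧
    -- and it is surjective:
    (∀ g : S →L[ℝ] ℝ, ∃ φ : X →L[ℂ] ℂ, Ts φ = φ ∧
      ∀ s : S, φ (s : X) = ((g s : ℝ) : ℂ)) := by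
  have hτ : IsConjugation τ := ⟨hadd, hconj, hiso, hinv⟩
  obtain rfl : S = hτ.fixedSubmodule := SetLike.ext hS
  obtain ⟨map_add, map_smul, norm_map, involutive⟩ := hτ.dual hTs
  refine ⟨⟨map_add, map_smul, norm_map, involutive⟩, fun φ hφ => ?_, fun g => ?_⟩
  · refine ⟨(RCLike.reCLM.comp (φ.restrictScalars ℝ)).comp hτ.fixedSubmodule.subtypeL,
      fun s => ?_, hτ.norm_re_comp_subtypeL ((dual_eq_self_iff hTs φ).1 hφ)⟩
    have hreal : conj (φ s) = φ s := by
      simpa only [hφ, show τ s = s from s.2] using (hTs φ s).symm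
    simpa using Complex.conj_eq_iff_re.mp hreal
  · exact ⟨extendRCLike (g.comp hτ.fixedPart),
      (dual_eq_self_iff hTs _).2 (hτ.re_extendRCLike_comp_fixedPart_map g),
      hτ.extendRCLike_comp_fixedPart_apply_coe g⟩
end

section
/- Let H, K be complex inner product spaces, x₁, x₂ ∈ H an orthonormal system, and A : H → K a real-linear orthogonality-preserving map with dense image such that A(ℂx₁) ⊆ ℂA(x₁), A(ℂx₂) ⊆ ℂA(x₂), and A(x₁) ≠ 0. Then ‖A(x₁)‖ = ‖A(x₂)‖, ‖A(i x₁)‖ = ‖A(i x₂)‖, and there is a single sign ε ∈ {+1, −1} with A(i x₁) = ε i A(x₁) and A(i x₂) = ε i A(x₂). -/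
open Complex
open scoped InnerProductSpace

/-!
If `u ⊥ v` and `‖u‖ = ‖v‖`, then `u + v` is orthogonal to both `u - v` and `I • (u - v)`.
Transporting these two relations by the orthogonality-preserving map `A` gives `‖A u‖ = ‖A v‖`
and `⟪A u, A (I • u)⟫ = ⟪A v, A (I • v)⟫`. Writing `A (I • xⱼ) = dⱼ • A xⱼ` and applying this
to the pairs `(x₁, x₂)`, `(I • x₁, x₂)` and `(x₁, I • x₂)` forces `d₁ = d₂`, `‖d₁‖ = 1` and
`re d₁ = 0`, i.e. `d₁ = ±I`.
-/

section

variable {H K : Type*} [NormedAddCommGroup H] [InnerProductSpace ℂ H]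
  [NormedAddCommGroup K] [InnerProductSpace ℂ K]

theorem norm_eq_of_inner_add_sub_eq_zero {u v : K} (h : ⟪u + v, u - v⟫_ℂ = 0) :
    ‖u‖ = ‖v‖ := by
  let _ := InnerProductSpace.rclikeToReal ℂ K
  rw [← real_inner_add_sub_eq_zero_iff, real_inner_eq_re_inner ℂ, h, map_zero]

theorem inner_add_sub_eq_zero_of_inner_eq_zero {u v : H} (huv : ⟪u, v⟫_ℂ = 0)
    (hn : ‖u‖ = ‖v‖) : ⟪u + v, u - v⟫_ℂ = 0 := by
  rw [inner_add_left, inner_sub_right, inner_sub_right, huv, inner_eq_zero_symm.mp huv,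
    inner_self_eq_norm_sq_to_K, inner_self_eq_norm_sq_to_K, hn]
  ring

variable {A : H →+ K} (horth : ∀ x y : H, ⟪x, y⟫_ℂ = 0 → ⟪A x, A y⟫_ℂ = 0)
include horth

theorem norm_map_eq_of_inner_eq_zero {u v : H} (huv : ⟪u, v⟫_ℂ = 0) (hn : ‖u‖ = ‖v‖) :
    ‖A u‖ = ‖A v‖ := by
  apply norm_eq_of_inner_add_sub_eq_zero
  simpa only [map_add, map_sub] using horth _ _ (inner_add_sub_eq_zero_of_inner_eq_zero huv hn)

theorem inner_map_I_smul_eq_of_inner_eq_zero {u v : H} (huv : ⟪u, v⟫_ℂ = 0)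
    (hn : ‖u‖ = ‖v‖) : ⟪A u, A (I • u)⟫_ℂ = ⟪A v, A (I • v)⟫_ℂ := by
  have h := horth (u + v) (I • u - I • v) (by
    rw [← smul_sub, inner_smul_right, inner_add_sub_eq_zero_of_inner_eq_zero huv hn, mul_zero])
  have huIv : ⟪A u, A (I • v)⟫_ℂ = 0 := horth _ _ (by rw [inner_smul_right, huv, mul_zero])
  have hvIu : ⟪A v, A (I • u)⟫_ℂ = 0 :=
    horth _ _ (by rw [inner_smul_right, inner_eq_zero_symm.mp huv, mul_zero])
  rw [map_add, map_sub, inner_add_left, inner_sub_right, inner_sub_right, huIv, hvIu] at h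
  linear_combination h

/-- Comparing `u` with `I • v` instead of `v`, and using `I • I • v = -v`, shows that this inner
product equals minus its own conjugate. -/
theorem re_inner_map_I_smul_eq_zero {u v : H} (huv : ⟪u, v⟫_ℂ = 0) (hn : ‖u‖ = ‖v‖) :
    (⟪A u, A (I • u)⟫_ℂ).re = 0 := by
  have h := inner_map_I_smul_eq_of_inner_eq_zero horth (v := I • v)
    (by rw [inner_smul_right, huv, mul_zero]) (by rw [norm_smul, norm_I, one_mul, hn])
  rw [smul_smul, I_mul_I, neg_one_smul, map_neg, inner_neg_right, ← inner_conj_symm (A (I • v)),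
    ← inner_map_I_smul_eq_of_inner_eq_zero horth huv hn] at h
  have := congrArg re h
  rw [neg_re, conj_re] at this
  linarith

end

theorem Complex.exists_sign_mul_I_of_re_eq_zero {d : ℂ} (hre : d.re = 0) (hnorm : ‖d‖ = 1) :
    ∃ ε : ℂ, (ε = 1 ∨ ε = -1) ∧ d = ε * I := by
  have hd : d = d.im * I := Complex.ext (by simp [hre]) (by simp)
  rw [hd, norm_mul, norm_I, mul_one, norm_real, Real.norm_eq_abs] at hnorm
  refine ⟨d.im, ?_, hd⟩
  rcases abs_eq (zero_le_one' ℝ) |>.mp hnorm with h | h <;> simp [h]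

theorem stmt_19_general {H K : Type*} [NormedAddCommGroup H] [InnerProductSpace ℂ H]
    [NormedAddCommGroup K] [InnerProductSpace ℂ K]
    (A : H → K)
    (hadd : ∀ x y, A (x + y) = A x + A y)
    (horth : ∀ x y : H, (inner ℂ x y : ℂ) = 0 → (inner ℂ (A x) (A y) : ℂ) = 0)
    (x₁ x₂ : H) (h₁ : ‖x₁‖ = 1) (h₂ : ‖x₂‖ = 1) (h₁₂ : (inner ℂ x₁ x₂ : ℂ) = 0)
    (hC₁ : ∀ c : ℂ, ∃ d : ℂ, A (c • x₁) = d • A x₁)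
    (hC₂ : ∀ c : ℂ, ∃ d : ℂ, A (c • x₂) = d • A x₂)
    (hAx₁ : A x₁ ≠ 0) :
    ‖A x₁‖ = ‖A x₂‖ ∧ ‖A (Complex.I • x₁)‖ = ‖A (Complex.I • x₂)‖ ∧
      ∃ ε : ℂ, (ε = 1 ∨ ε = -1) ∧
        A (Complex.I • x₁) = (ε * Complex.I) • A x₁ ∧
        A (Complex.I • x₂) = (ε * Complex.I) • A x₂ := by
  let B : H →+ K := AddMonoidHom.mk' A hadd
  have hn : ‖x₁‖ = ‖x₂‖ := h₁.trans h₂.symm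
  have hI (x : H) : ‖I • x‖ = ‖x‖ := by rw [norm_smul, norm_I, one_mul]
  have hy : ‖A x₁‖ = ‖A x₂‖ := norm_map_eq_of_inner_eq_zero (A := B) horth h₁₂ hn
  have hz₁ : ‖A (I • x₁)‖ = ‖A x₁‖ := (norm_map_eq_of_inner_eq_zero (A := B) horth
    (by rw [inner_smul_left, h₁₂, mul_zero]) ((hI x₁).trans hn)).trans hy.symm
  have hz₂ : ‖A (I • x₂)‖ = ‖A x₁‖ := norm_map_eq_of_inner_eq_zero (A := B) horth
    (by rw [inner_smul_left, inner_eq_zero_symm.mp h₁₂, mul_zero]) ((hI x₂).trans hn.symm)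
  obtain ⟨d₁, hd₁⟩ := hC₁ I
  obtain ⟨d₂, hd₂⟩ := hC₂ I
  have hr : (‖A x₁‖ : ℂ) ^ 2 ≠ 0 := by simpa using hAx₁
  have hc := inner_map_I_smul_eq_of_inner_eq_zero (A := B) horth h₁₂ hn
  have hre := re_inner_map_I_smul_eq_zero (A := B) horth h₁₂ hn
  simp only [B, AddMonoidHom.mk'_apply, hd₁, hd₂, inner_smul_right, inner_self_eq_norm_sq_to_K,
    ← hy] at hc hre
  have hd : d₁ = d₂ := mul_right_cancel₀ hr hc
  have hnorm : ‖d₁‖ = 1 := by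
    rwa [hd₁, norm_smul, mul_left_eq_self₀, or_iff_left (norm_ne_zero_iff.mpr hAx₁)] at hz₁
  have hre₁ : d₁.re = 0 := by
    rw [← RCLike.ofReal_pow, ← RCLike.re_to_complex, RCLike.re_mul_ofReal] at hre
    exact (mul_eq_zero.mp hre).resolve_right (by simpa using hAx₁)
  obtain ⟨ε, hε, hd₁ε⟩ := Complex.exists_sign_mul_I_of_re_eq_zero hre₁ hnorm
  exact ⟨hy, hz₁.trans hz₂.symm, ε, hε, hd₁.trans (by rw [hd₁ε]), hd₂.trans (by rw [← hd, hd₁ε])⟩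

theorem stmt_19 {H K : Type*} [NormedAddCommGroup H] [InnerProductSpace ℂ H]
    [NormedAddCommGroup K] [InnerProductSpace ℂ K]
    (A : H → K)
    (hadd : ∀ x y, A (x + y) = A x + A y)
    (hreal : ∀ (t : ℝ) (x : H), A (t • x) = t • A x)
    (hdense : DenseRange A)
    (horth : ∀ x y : H, (inner ℂ x y : ℂ) = 0 → (inner ℂ (A x) (A y) : ℂ) = 0)
    (hinj : ∀ x : H, x ≠ 0 → A x ≠ 0)
    (x₁ x₂ : H) (h₁ : ‖x₁‖ = 1) (h₂ : ‖x₂‖ = 1) (h₁₂ : (inner ℂ x₁ x₂ : ℂ) = 0)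
    (hC₁ : ∀ c : ℂ, ∃ d : ℂ, A (c • x₁) = d • A x₁)
    (hC₂ : ∀ c : ℂ, ∃ d : ℂ, A (c • x₂) = d • A x₂)
    (hAx₁ : A x₁ ≠ 0) :
    ‖A x₁‖ = ‖A x₂‖ ∧ ‖A (Complex.I • x₁)‖ = ‖A (Complex.I • x₂)‖ ∧
      ∃ ε : ℂ, (ε = 1 ∨ ε = -1) ∧
        A (Complex.I • x₁) = (ε * Complex.I) • A x₁ ∧
        A (Complex.I • x₂) = (ε * Complex.I) • A x₂ :=
  stmt_19_general A hadd horth x₁ x₂ h₁ h₂ h₁₂ hC₁ hC₂ hAx₁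
end
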